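/- Let S be a finite nonempty set, ρ : ℕ → S an infinite sequence, and B ⊆ S a nonempty set such that: (a) there exists N with ρ_n ∈ B for all n ≥ N; (b) for every b ∈ B the set {n : ρ_n = b} is infinite; and (c) for every n, if ρ_n ∈ B then ρ_{n+1} ∈ B. Then for every k ∈ ℕ there exists N' such that for all n ≥ N': (i) every b ∈ B occurs at least k times among ρ_0,…,ρ_{n−1}; (ii) any two elements of B are mutually reachable in the trace graph of the prefix ρ_0 ⋯ ρ_n; and (iii) the mutual-reachability class of ρ_n in the trace graph of the prefix ρ_0 ⋯ ρ_n equals B. In particular, the prefix ρ_0 ⋯ ρ_n is closed, the unique bottom SCC of its trace graph is B, and m_{ρ_0⋯ρ_n} ≥ k. -/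
import Mathlib


/-- The edge relation of the trace graph of the prefix `ρ 0 ⋯ ρ n`. -/
def traceEdge {S : Type*} (ρ : ℕ → S) (n : ℕ) (a b : S) : Prop :=
  ∃ i < n, ρ i = a ∧ ρ (i + 1) = b

/-- Reachability in the trace graph of the prefix `ρ 0 ⋯ ρ n`. -/
def traceReach {S : Type*} (ρ : ℕ → S) (n : ℕ) : S → S → Prop :=
  Relation.ReflTransGen (traceEdge ρ n)

/-- `#_π(a)` for the prefix `π = ρ 0 ⋯ ρ n`: the number of occurrences of `a`
among `ρ 0, …, ρ (n-1)`. -/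
def traceCount {S : Type*} [DecidableEq S] (ρ : ℕ → S) (n : ℕ) (a : S) : ℕ :=
  ((Finset.range n).filter (fun i => ρ i = a)).card

/-- `B` is a bottom SCC of the trace graph of the prefix `ρ 0 ⋯ ρ n`:
nonempty, a set of vertices of the graph, any two of its vertices mutually
reachable, closed under edges, and
a full mutual-reachability class. -/
def IsBSCCOf {S : Type*} (ρ : ℕ → S) (n : ℕ) (B : Set S) : Prop :=
  B.Nonempty ∧
  (∀ a ∈ B, ∃ i ≤ n, ρ i = a) ∧
  (∀ a ∈ B, ∀ b ∈ B, traceReach ρ n a b) ∧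
  (∀ a ∈ B, ∀ b, traceEdge ρ n a b → b ∈ B) ∧
  (∀ a ∈ B, ∀ b, traceReach ρ n a b → traceReach ρ n b a → b ∈ B)


lemma reach_of_le {S : Type*} (ρ : ℕ → S) {i j n : ℕ} (hij : i ≤ j) (hjn : j ≤ n) :
    traceReach ρ n (ρ i) (ρ j) := by
  induction j, hij using Nat.le_induction with
  | base => exact Relation.ReflTransGen.refl
  | succ j hij ih =>
    exact (ih (le_trans (Nat.le_succ j) hjn)).tail
      ⟨j, lt_of_lt_of_le (Nat.lt_succ_self j) hjn, rfl, rfl⟩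

lemma reach_closed {S : Type*} (ρ : ℕ → S) (n : ℕ) (B : Set S)
    (hB : ∀ a ∈ B, ∀ b, traceEdge ρ n a b → b ∈ B)
    {a b : S} (haB : a ∈ B) (h : traceReach ρ n a b) : b ∈ B := by
  induction h with
  | refl => exact haB
  | tail _ hedge ih => exact hB _ ih _ hedge

lemma traceCount_mono {S : Type*} [DecidableEq S] (ρ : ℕ → S) {m n : ℕ} (h : m ≤ n) (a : S) :
    traceCount ρ m a ≤ traceCount ρ n a :=
  Finset.card_le_card (Finset.filter_subset_filter _ (Finset.range_subset_range.2 h))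

/-- Let `S` be finite and nonempty, `ρ : ℕ → S` an infinite
sequence and `B ⊆ S` nonempty such that (a) `ρ` eventually stays in `B`,
(b) every `b ∈ B` occurs infinitely often in `ρ`, and (c) `B` is closed under
successors along `ρ`. Then for every `k` there is `N'` such that for all
`n ≥ N'`: (i) every `b ∈ B` occurs at least `k` times among `ρ 0, …, ρ (n-1)`;
(ii) any two elements of `B` are mutually reachable in the trace graph of the
prefix `ρ 0 ⋯ ρ n`; (iii) the mutual-reachability class of `ρ n` in that trace
graph equals `B`. In particular the prefix is closed, `B` is the unique bottom
SCC of its trace graph, and `m_{ρ 0 ⋯ ρ n} ≥ k`. -/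
theorem eventually_BSCC_of_prefixes {S : Type*} [Fintype S] [Nonempty S] [DecidableEq S]
    (ρ : ℕ → S) (B : Set S) (hBne : B.Nonempty)
    (ha : ∃ N, ∀ n ≥ N, ρ n ∈ B)
    (hb : ∀ b ∈ B, {n : ℕ | ρ n = b}.Infinite)
    (hc : ∀ n, ρ n ∈ B → ρ (n + 1) ∈ B) :
    ∀ k : ℕ, ∃ N', ∀ n ≥ N',
      (∀ b ∈ B, k ≤ traceCount ρ n b) ∧
      (∀ a ∈ B, ∀ b ∈ B, traceReach ρ n a b ∧ traceReach ρ n b a) ∧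
      ({v | traceReach ρ n (ρ n) v ∧ traceReach ρ n v (ρ n)} = B) ∧
      (∃ i < n, ρ i = ρ n) ∧
      IsBSCCOf ρ n B ∧
      (∀ B' : Set S, IsBSCCOf ρ n B' → B' = B) ∧
      k ≤ sInf (traceCount ρ n '' B) := by
  
  classical
  obtain ⟨N, hN⟩ := ha
  intro k
  have occ : ∀ L : ℕ, ∃ M, L < M ∧ ∀ b ∈ B, ∃ i, L < i ∧ i ≤ M ∧ ρ i = b := by
    intro L
    have h1 : ∀ b : S, ∃ m, L < m ∧ (b ∈ B → ρ m = b) := by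
      intro b
      by_cases hbB : b ∈ B
      · have hex : ∃ i ∈ {n | ρ n = b}, L < i := by
          by_contra hcon
          push_neg at hcon
          exact (hb b hbB) ((Set.finite_Iic L).subset fun x hx => hcon x hx)
        obtain ⟨i, hi1, hi2⟩ := hex
        exact ⟨i, hi2, fun _ => hi1⟩
      · exact ⟨L + 1, Nat.lt_succ_self L, fun h => absurd h hbB⟩
    choose f hf using h1
    refine ⟨Finset.univ.sup f ⊔ (L + 1), ?_, fun b hbB =>
      ⟨f b, (hf b).1, le_trans (Finset.le_sup (Finset.mem_univ b)) le_sup_left, (hf b).2 hbB⟩⟩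
    exact lt_of_lt_of_le (Nat.lt_succ_self L) le_sup_right
  have cnt : ∃ M, ∀ b ∈ B, k ≤ traceCount ρ M b := by
    have h1 : ∀ b : S, ∃ m, b ∈ B → k ≤ traceCount ρ m b := by
      intro b
      by_cases hbB : b ∈ B
      · obtain ⟨t, hts, htc⟩ := (hb b hbB).exists_subset_card_eq k
        refine ⟨t.sup id + 1, fun _ => ?_⟩
        have hsub : t ⊆ (Finset.range (t.sup id + 1)).filter (fun i => ρ i = b) := by
          intro i hit
          simp only [Finset.mem_filter, Finset.mem_range]
          exact ⟨Nat.lt_succ_of_le (Finset.le_sup (f := id) hit), hts hit⟩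
        calc k = t.card := htc.symm
          _ ≤ _ := Finset.card_le_card hsub
      · exact ⟨0, fun h => absurd h hbB⟩
    choose f hf using h1
    exact ⟨Finset.univ.sup f, fun b hbB =>
      le_trans (hf b hbB) (traceCount_mono ρ (Finset.le_sup (Finset.mem_univ b)) b)⟩
  obtain ⟨N1, hNN1, hN1⟩ := occ N
  obtain ⟨N2, hN12, hN2⟩ := occ N1
  obtain ⟨M, hM⟩ := cnt
  refine ⟨max N2 M, fun n hn => ?_⟩
  have hN2n : N2 ≤ n := le_trans (le_max_left _ _) hn
  have hMn : M ≤ n := le_trans (le_max_right _ _) hn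
  have hNn : N ≤ n := le_trans (le_of_lt (lt_trans hNN1 hN12)) hN2n
  have hρn : ρ n ∈ B := hN n hNn
  have mutual1 : ∀ a ∈ B, ∀ b ∈ B, traceReach ρ n a b := by
    intro a haB b hbB
    obtain ⟨i, hi1, hi2, hi3⟩ := hN1 a haB
    obtain ⟨j, hj1, hj2, hj3⟩ := hN2 b hbB
    have h := reach_of_le ρ (le_of_lt (lt_of_le_of_lt hi2 hj1)) (le_trans hj2 hN2n)
    rwa [hi3, hj3] at h
  have edgecl : ∀ a ∈ B, ∀ b, traceEdge ρ n a b → b ∈ B := by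
    rintro a haB b ⟨i, _, rfl, rfl⟩
    exact hc i haB
  have counts : ∀ b ∈ B, k ≤ traceCount ρ n b := fun b hbB =>
    le_trans (hM b hbB) (traceCount_mono ρ hMn b)
  have classeq : {v | traceReach ρ n (ρ n) v ∧ traceReach ρ n v (ρ n)} = B := by
    ext v
    constructor
    · rintro ⟨h1, _⟩
      exact reach_closed ρ n B edgecl hρn h1
    · intro hv
      exact ⟨mutual1 _ hρn _ hv, mutual1 _ hv _ hρn⟩
  have closedTr : ∃ i < n, ρ i = ρ n := by
    obtain ⟨i, hi1, hi2, hi3⟩ := hN1 (ρ n) hρn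
    exact ⟨i, lt_of_le_of_lt hi2 (lt_of_lt_of_le hN12 hN2n), hi3⟩
  have hBSCC : IsBSCCOf ρ n B := by
    refine ⟨hBne, ?_, mutual1, edgecl, fun a haB b hab _ => reach_closed ρ n B edgecl haB hab⟩
    intro a haB
    obtain ⟨i, hi1, hi2, hi3⟩ := hN1 a haB
    exact ⟨i, le_trans hi2 (le_trans (le_of_lt hN12) hN2n), hi3⟩
  have uniq : ∀ B' : Set S, IsBSCCOf ρ n B' → B' = B := by
    rintro B' ⟨hne', hvert', hmut', hedge', _⟩
    obtain ⟨a', ha'⟩ := hne'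
    obtain ⟨i, hin, hi⟩ := hvert' a' ha'
    have hreach : traceReach ρ n a' (ρ n) := by
      rw [← hi]; exact reach_of_le ρ hin le_rfl
    have hρnB' : ρ n ∈ B' := reach_closed ρ n B' hedge' ha' hreach
    apply Set.Subset.antisymm
    · intro b' hb'
      exact reach_closed ρ n B edgecl hρn (hmut' _ hρnB' _ hb')
    · intro b hbB
      exact reach_closed ρ n B' hedge' hρnB' (mutual1 _ hρn _ hbB)
  refine ⟨counts, fun a haB b hbB => ⟨mutual1 a haB b hbB, mutual1 b hbB a haB⟩,
    classeq, closedTr, hBSCC, uniq, ?_⟩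
  refine le_csInf (hBne.image _) ?_
  rintro m ⟨b, hbB, rfl⟩
  exact counts b hbB
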